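/- Consider the binary (divide-and-conquer) semi-naive evaluation of transitive closure on a finite directed graph (V,E): δT^0 = E, T^0 = E, and for i ≥ 1, δT^i = {(x,y) ∉ T^{i-1} : ∃z, ((x,z) ∈ δT^{i-1} ∧ (z,y) ∈ T^{i-1}) ∨ ((x,z) ∈ T^{i-1} ∧ (z,y) ∈ δT^{i-1})}, with T^i = T^{i-1} ∪ δT^i. Then for every i ≥ 0, T^i equals the set of pairs connected by an E-path of length between 1 and 2^i. Consequently the fixpoint, equal to the transitive closure of E, is reached after at most ⌈log2 d⌉ iterations, where d is the maximum over connected pairs of the shortest E-path length. -/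

import Mathlib

/-- An unlabeled path of a given length. -/
def lenPath {V : Type*} (P : V → V → Prop) : ℕ → V → V → Prop
  | 0, v, u => u = v
  | k + 1, v, u => ∃ z, P v z ∧ lenPath P k z u

/-- One step of semi-naive evaluation of the binary (divide-and-conquer)
formulation of transitive closure: `semiNaiveBin E i = (δT^i, T^i)`. -/
def semiNaiveBin {V : Type*} (E : V → V → Prop) : ℕ → (V → V → Prop) × (V → V → Prop)
  | 0 => (E, E)
  | i + 1 =>
    let d := (semiNaiveBin E i).1
    let t := (semiNaiveBin E i).2
    let d' := fun x y =>
      (∃ z, (d x z ∧ t z y) ∨ (t x z ∧ d z y)) ∧ ¬ t x y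
    (d', fun x y => t x y ∨ d' x y)

/-!
Semi-naive evaluation computes the same relations as naive doubling: a new pair of
`T^{i+1}` is a composite of two pairs of `T^i`, and if neither of them were new in `T^i`
then both lay in `T^{i-1}` and their composite would already lie in `T^i`. Hence
`T^{i+1} = T^i ∪ T^i ∘ T^i`, and since paths of length at most `2n` are exactly those
of length at most `n` or composites of two such paths, `T^i` consists of the pairs joined
by a path of length between `1` and `2^i`.
-/

section Paths

variable {V : Type*} {E : V → V → Prop}

lemma lenPath_add : ∀ {a b : ℕ} {x z y : V},
    lenPath E a x z → lenPath E b z y → lenPath E (a + b) x y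
  | 0, _, _, _, _, rfl, h => by simpa using h
  | a + 1, _, _, _, _, ⟨w, hw, h⟩, h' => by
    rw [Nat.succ_add]
    exact ⟨w, hw, lenPath_add h h'⟩

lemma exists_lenPath_of_lenPath_add : ∀ {a b : ℕ} {x y : V},
    lenPath E (a + b) x y → ∃ z, lenPath E a x z ∧ lenPath E b z y
  | 0, _, x, _, h => ⟨x, rfl, by simpa using h⟩
  | a + 1, b, _, _, h => by
    rw [Nat.succ_add] at h
    obtain ⟨w, hw, h⟩ := h
    obtain ⟨z, hwz, hzy⟩ := exists_lenPath_of_lenPath_add h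
    exact ⟨z, ⟨w, hw, hwz⟩, hzy⟩

lemma Relation.TransGen.of_lenPath_succ : ∀ {k : ℕ} {x y : V},
    lenPath E (k + 1) x y → Relation.TransGen E x y
  | 0, _, _, ⟨_, hxz, rfl⟩ => .single hxz
  | _ + 1, _, _, ⟨_, hxz, h⟩ => .head hxz (of_lenPath_succ h)

lemma Relation.TransGen.of_lenPath {k : ℕ} {x y : V} (hk : 1 ≤ k) (h : lenPath E k x y) :
    Relation.TransGen E x y := by
  obtain ⟨m, rfl⟩ := Nat.exists_eq_add_of_le' hk
  exact of_lenPath_succ h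

variable (E) in
def ReachWithin (n : ℕ) (x y : V) : Prop :=
  ∃ k, 1 ≤ k ∧ k ≤ n ∧ lenPath E k x y

lemma ReachWithin.mono {m n : ℕ} {x y : V} (hmn : m ≤ n) (h : ReachWithin E m x y) :
    ReachWithin E n x y :=
  let ⟨k, hk, hkm, hp⟩ := h
  ⟨k, hk, hkm.trans hmn, hp⟩

lemma ReachWithin.trans {m n : ℕ} {x z y : V} (hxz : ReachWithin E m x z)
    (hzy : ReachWithin E n z y) : ReachWithin E (m + n) x y :=
  let ⟨a, ha, ham, hpa⟩ := hxz
  let ⟨b, _, hbn, hpb⟩ := hzy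
  ⟨a + b, ha.trans (Nat.le_add_right a b), Nat.add_le_add ham hbn, lenPath_add hpa hpb⟩

lemma reachWithin_add_iff {m n : ℕ} (hm : 1 ≤ m) {x y : V} :
    ReachWithin E (m + n) x y ↔
      ReachWithin E m x y ∨ ∃ z, ReachWithin E m x z ∧ ReachWithin E n z y := by
  refine ⟨fun ⟨k, hk, hkmn, hp⟩ => ?_, ?_⟩
  · by_cases hkm : k ≤ m
    · exact .inl ⟨k, hk, hkm, hp⟩
    obtain ⟨l, rfl⟩ := Nat.exists_eq_add_of_lt (not_le.mp hkm)
    obtain ⟨z, hxz, hzy⟩ := exists_lenPath_of_lenPath_add (a := m) (b := l + 1) hp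
    exact .inr ⟨z, ⟨m, hm, le_rfl, hxz⟩, ⟨l + 1, le_add_self, by omega, hzy⟩⟩
  · rintro (h | ⟨z, hxz, hzy⟩)
    · exact h.mono (Nat.le_add_right m n)
    · exact hxz.trans hzy

end Paths

section SemiNaive

variable {V : Type*} (E : V → V → Prop)

lemma semiNaiveBin_fst_le_snd : ∀ (i : ℕ) (x y : V),
    (semiNaiveBin E i).1 x y → (semiNaiveBin E i).2 x y
  | 0, _, _, h => h
  | _ + 1, _, _, h => .inr h

lemma semiNaiveBin_snd_of_comp : ∀ {i : ℕ} {x z y : V},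
    (semiNaiveBin E i).2 x z → (semiNaiveBin E i).2 z y → (semiNaiveBin E (i + 1)).2 x y
  | 0, x, _, y, hxz, hzy => by
    by_cases hxy : E x y
    · exact .inl hxy
    · exact .inr ⟨⟨_, .inl ⟨hxz, hzy⟩⟩, hxy⟩
  | i + 1, x, z, y, hxz, hzy => by
    by_cases hxy : (semiNaiveBin E (i + 1)).2 x y
    · exact .inl hxy
    refine .inr ⟨⟨z, ?_⟩, hxy⟩
    rcases hxz with hxz | hxz
    · rcases hzy with hzy | hzy
      · exact absurd (semiNaiveBin_snd_of_comp hxz hzy) hxy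
      · exact .inr ⟨.inl hxz, hzy⟩
    · exact .inl ⟨hxz, hzy⟩

theorem semiNaiveBin_snd_succ_iff_comp (i : ℕ) (x y : V) :
    (semiNaiveBin E (i + 1)).2 x y ↔
      (semiNaiveBin E i).2 x y ∨ ∃ z, (semiNaiveBin E i).2 x z ∧ (semiNaiveBin E i).2 z y := by
  refine ⟨?_, ?_⟩
  · rintro (hxy | ⟨⟨z, ⟨hxz, hzy⟩ | ⟨hxz, hzy⟩⟩, -⟩)
    · exact .inl hxy
    · exact .inr ⟨z, semiNaiveBin_fst_le_snd E i x z hxz, hzy⟩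
    · exact .inr ⟨z, hxz, semiNaiveBin_fst_le_snd E i z y hzy⟩
  · rintro (hxy | ⟨z, hxz, hzy⟩)
    · exact .inl hxy
    · exact semiNaiveBin_snd_of_comp E hxz hzy

theorem semiNaiveBin_snd_iff_reachWithin : ∀ (i : ℕ) (x y : V),
    (semiNaiveBin E i).2 x y ↔ ReachWithin E (2 ^ i) x y
  | 0, x, y => by
    refine ⟨fun h => ⟨1, le_rfl, le_rfl, y, h, rfl⟩, ?_⟩
    rintro ⟨k, hk, hk', hp⟩
    obtain rfl : k = 1 := by omega
    obtain ⟨_, hxz, rfl⟩ := hp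
    exact hxz
  | i + 1, x, y => by
    simp only [semiNaiveBin_snd_succ_iff_comp, semiNaiveBin_snd_iff_reachWithin i, pow_succ,
      mul_two, reachWithin_add_iff Nat.one_le_two_pow]

end SemiNaive

theorem stmt_13_general {V : Type*} (E : V → V → Prop) :
    (∀ (i : ℕ) (x y : V),
      (semiNaiveBin E i).2 x y ↔ ∃ k : ℕ, 1 ≤ k ∧ k ≤ 2 ^ i ∧ lenPath E k x y) ∧
    (∀ d : ℕ,
      (∀ x y : V, Relation.TransGen E x y → ∃ k : ℕ, 1 ≤ k ∧ k ≤ d ∧ lenPath E k x y) →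
      ∀ x y : V, (semiNaiveBin E (Nat.clog 2 d)).2 x y ↔ Relation.TransGen E x y) := by
  refine ⟨semiNaiveBin_snd_iff_reachWithin E, fun d hd x y => ?_⟩
  rw [semiNaiveBin_snd_iff_reachWithin]
  refine ⟨fun ⟨k, hk, _, hp⟩ => .of_lenPath hk hp, fun hxy => ?_⟩
  exact ReachWithin.mono (Nat.le_pow_clog one_lt_two d) (hd x y hxy)

theorem stmt_13 {V : Type*} [Fintype V] (E : V → V → Prop) :
    (∀ (i : ℕ) (x y : V),
      (semiNaiveBin E i).2 x y ↔ ∃ k : ℕ, 1 ≤ k ∧ k ≤ 2 ^ i ∧ lenPath E k x y) ∧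
    (∀ d : ℕ,
      (∀ x y : V, Relation.TransGen E x y → ∃ k : ℕ, 1 ≤ k ∧ k ≤ d ∧ lenPath E k x y) →
      ∀ x y : V, (semiNaiveBin E (Nat.clog 2 d)).2 x y ↔ Relation.TransGen E x y) :=
  stmt_13_general E
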